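/- Matching count in the odd-type shuriken graph: Let N ≥ 4 be an even integer and let S_N^1 be the shuriken graph with tips v_1,…,v_N, inner vertices u_1,…,u_N and centre c. Then for every subset T of the set of tips {v_1,…,v_N}, the number of matchings of S_N^1 whose set of covered vertices is exactly {u_1,…,u_N, c} ∪ T is equal to N if |T| is odd, and equal to 0 if |T| is even. -/

import Mathlib

/-!
Once the centre `c` is matched to the inner vertex `u_k`, list the vertices as
`c, u_k, v_{k+1}, u_{k+1}, v_{k+2}, …, v_{k-1}, u_{k-1}, v_k`, each tip `v_i` right after its
neighbour `u_{i-1}` and, unless `i = k`, right before its neighbour `u_i`. Vertices that are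
consecutive among the covered ones are adjacent, since all inner vertices are covered.
Conversely every matching edge joins two such consecutive vertices: the only other candidates are
`c u_j` with `j ≠ k`, and `u_{i-1} u_i` with `v_i` covered, which would leave `v_i` without a
partner. On a linearly ordered finite set, a matching that covers it and joins only consecutive
elements is unique (compare partners from the bottom up), and exists when the set has even size
(pair off the two lowest elements). As `N` is even, `1 + N + |T|` is even exactly when `|T|` is
odd, so there is one matching for each `k` when `|T|` is odd and none otherwise.
-/

/-- The odd-type shuriken graph `S_N^1` on vertices `some (Sum.inl t)` (the tips
`v_{t+1}`), `some (Sum.inr i)` (the inner vertices `u_{i+1}`) and `none` (the centre `c`).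
Its edges are the inner cycle edges `{u_i, u_{i+1}}` (indices mod `N`), the blade edges
`{v_j, u_{j-1}}, {v_j, u_j}` for `2 ≤ j ≤ N` together with `{v_1, u_1}` and `{v_1, u_N}`
(in 0-based terms: tip `t` is adjacent to inner `t` and inner `(t+N-1) % N`), and the
edges `{c, u_i}` joining the centre to every inner vertex. -/
def shuriken1 (N : ℕ) : SimpleGraph (Option (Fin N ⊕ Fin N)) :=
  SimpleGraph.fromRel (fun a b =>
    match a, b with
    | some (Sum.inr i), some (Sum.inr j) => j.1 = (i.1 + 1) % N
    | some (Sum.inl t), some (Sum.inr i) => i = t ∨ i.1 = (t.1 + N - 1) % N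
    | none, some (Sum.inr _) => True
    | _, _ => False)

def IsSuccOn {V : Type*} (h : V → ℕ) (W : Set V) (x y : V) : Prop :=
  x ∈ W ∧ y ∈ W ∧ h x < h y ∧ ∀ z ∈ W, h z ≤ h x ∨ h y ≤ h z

namespace IsSuccOn

variable {V : Type*} {h : V → ℕ} {W : Set V} {x y y' z : V}

lemma of_eq_add_one (hx : x ∈ W) (hy : y ∈ W) (hxy : h y = h x + 1) : IsSuccOn h W x y :=
  ⟨hx, hy, by omega, fun _ _ => by omega⟩

lemma not_between (hs : IsSuccOn h W x y) (hz : z ∈ W) (hxz : h x < h z) (hzy : h z < h y) :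
    False := by
  rcases hs.2.2.2 z hz with hz | hz <;> omega

lemma unique (hinj : Set.InjOn h W) (hy : IsSuccOn h W x y) (hy' : IsSuccOn h W x y') :
    y = y' := by
  refine hinj hy.2.1 hy'.2.1 ?_
  have := hy.2.2.2 _ hy'.2.1
  have := hy'.2.2.2 _ hy.2.1
  have := hy.2.2.1
  have := hy'.2.2.1
  omega

lemma mono {W' : Set V} (hW : W' ⊆ W) (hlow : ∀ z ∈ W, z ∉ W' → h z ≤ h x)
    (hs : IsSuccOn h W' x y) : IsSuccOn h W x y := by
  refine ⟨hW hs.1, hW hs.2.1, hs.2.2.1, fun z hz => ?_⟩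
  by_cases hz' : z ∈ W'
  · exact hs.2.2.2 z hz'
  · exact Or.inl (hlow z hz hz')

variable [DecidableEq V] {s : Finset V} {a b : V}

lemma of_lowest_two (hinj : Set.InjOn h s) (ha : a ∈ s) (hamin : ∀ z ∈ s, h a ≤ h z)
    (hb : b ∈ s.erase a) (hbmin : ∀ z ∈ s.erase a, h b ≤ h z) : IsSuccOn h s a b := by
  obtain ⟨hba, hbW⟩ := Finset.mem_erase.mp hb
  refine ⟨ha, hbW, lt_of_le_of_ne (hamin b hbW) fun e => hba (hinj hbW ha e.symm), ?_⟩
  intro z hz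
  by_cases hza : z = a
  · exact Or.inl (hza ▸ le_rfl)
  · exact Or.inr (hbmin z (Finset.mem_erase.mpr ⟨hza, hz⟩))

lemma of_erase_lowest_two (ha : ∀ z ∈ s, h a ≤ h z) (hb : ∀ z ∈ s.erase a, h b ≤ h z)
    (hs : IsSuccOn h ((s.erase a).erase b : Finset V) x y) : IsSuccOn h s x y := by
  refine hs.mono (fun z hz => Finset.mem_of_mem_erase (Finset.mem_of_mem_erase hz)) ?_
  intro z hz hzs'
  have hx : x ∈ s.erase a := Finset.mem_of_mem_erase hs.1
  by_cases hza : z = a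
  · exact hza ▸ ha x (Finset.mem_of_mem_erase hx)
  · have hzb : z = b := by
      by_contra hzb
      exact hzs' (by simp [hza, hzb, hz])
    exact hzb ▸ hb x hx

end IsSuccOn

namespace SimpleGraph.Subgraph

variable {V : Type*} {G : SimpleGraph V}

def JoinsSucc (M : G.Subgraph) (h : V → ℕ) : Prop :=
  ∀ ⦃x y⦄, M.Adj x y → IsSuccOn h M.verts x y ∨ IsSuccOn h M.verts y x

variable {M M' : G.Subgraph} {h : V → ℕ}

lemma IsMatching.adj_of_adj_of_forall_lt (hM : M.IsMatching) (hM' : M'.IsMatching)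
    (hverts : M.verts = M'.verts) (hinj : Set.InjOn h M.verts)
    (hMs : M.JoinsSucc h) (hM's : M'.JoinsSucc h) {x y : V}
    (below : ∀ z, h z < h x → ∀ w, M.Adj z w ↔ M'.Adj z w) (hxy : M.Adj x y) :
    M'.Adj x y := by
  obtain ⟨y', hxy', -⟩ := hM' (hverts ▸ M.edge_vert hxy)
  rcases hMs hxy with hs | hs
  · rcases hM's hxy' with hs' | hs'
    · rw [hverts] at hs hinj
      rwa [hs.unique hinj hs']
    · rwa [hM.eq_of_adj_left hxy ((below y' hs'.2.2.1 x).mpr hxy'.symm).symm]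
  · exact ((below y hs.2.2.1 x).mp hxy.symm).symm

lemma IsMatching.eq_of_joinsSucc (hM : M.IsMatching) (hM' : M'.IsMatching)
    (hverts : M.verts = M'.verts) (hinj : Set.InjOn h M.verts)
    (hMs : M.JoinsSucc h) (hM's : M'.JoinsSucc h) : M = M' := by
  have key : ∀ n x, h x = n → ∀ y, M.Adj x y ↔ M'.Adj x y := by
    intro n
    induction n using Nat.strong_induction_on with
    | _ n ih =>
      rintro x rfl y
      have below : ∀ z, h z < h x → ∀ w, M.Adj z w ↔ M'.Adj z w := fun z hz => ih _ hz z rfl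
      exact ⟨hM.adj_of_adj_of_forall_lt hM' hverts hinj hMs hM's below,
        hM'.adj_of_adj_of_forall_lt hM hverts.symm (hverts ▸ hinj) hM's hMs
          fun z hz w => (below z hz w).symm⟩
  ext
  · rw [hverts]
  · exact key _ _ rfl _

lemma exists_isMatching_joinsSucc [DecidableEq V] (h : V → ℕ) (W : Finset V)
    (hinj : Set.InjOn h W) (heven : Even W.card)
    (hadj : ∀ x y, IsSuccOn h W x y → G.Adj x y) :
    ∃ M : G.Subgraph, M.IsMatching ∧ M.verts = W ∧ M.JoinsSucc h := by
  induction W using Finset.strongInduction with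
  | H W ih =>
  rcases W.eq_empty_or_nonempty with rfl | hne
  · exact ⟨⊥, fun _ hv => hv.elim, by simp, fun _ _ hxy => hxy.elim⟩
  obtain ⟨a, ha, hamin⟩ := W.exists_min_image h hne
  have hcard := Finset.card_erase_add_one ha
  have hne' : (W.erase a).Nonempty := by
    rw [← Finset.card_pos]
    obtain ⟨m, hm⟩ := heven
    omega
  obtain ⟨b, hb, hbmin⟩ := (W.erase a).exists_min_image h hne'
  have hab := IsSuccOn.of_lowest_two hinj ha hamin hb hbmin
  have hssub : (W.erase a).erase b ⊂ W :=
    (Finset.erase_ssubset hb).trans (Finset.erase_ssubset ha)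
  have heven' : Even ((W.erase a).erase b).card := by
    rw [← hcard, ← Finset.card_erase_add_one hb, add_assoc] at heven
    exact (Nat.even_add.mp heven).mpr even_two
  obtain ⟨M', hM', hverts', hsucc'⟩ := ih _ hssub (hinj.mono hssub.subset) heven'
    (fun x y hs => hadj x y (hs.of_erase_lowest_two hamin hbmin))
  have hverts : (M' ⊔ G.subgraphOfAdj (hadj a b hab)).verts = W := by
    obtain ⟨hba, hbW⟩ := Finset.mem_erase.mp hb
    ext z
    by_cases hza : z = a <;> by_cases hzb : z = b <;> simp [*]
  refine ⟨M' ⊔ G.subgraphOfAdj (hadj a b hab), hM'.sup (.subgraphOfAdj _) ?_, hverts, ?_⟩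
  · rw [hM'.support_eq_verts, (IsMatching.subgraphOfAdj _).support_eq_verts, hverts']
    simp
  · intro x y hxy
    rw [hverts]
    rcases hxy with hxy | hxy
    · have := hsucc' hxy
      rw [hverts'] at this
      exact this.imp (·.of_erase_lowest_two hamin hbmin) (·.of_erase_lowest_two hamin hbmin)
    · rw [subgraphOfAdj_adj, Sym2.eq_iff] at hxy
      rcases hxy with ⟨rfl, rfl⟩ | ⟨rfl, rfl⟩
      · exact Or.inl hab
      · exact Or.inr hab

lemma IsMatching.even_card_of_verts_eq {W : Finset V} (hM : M.IsMatching)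
    (hW : M.verts = W) : Even W.card := by
  have : Fintype M.verts := by rw [hW]; infer_instance
  simpa [hW] using hM.even_card

end SimpleGraph.Subgraph

namespace Fin

variable {N : ℕ} [NeZero N]

lemma val_add_one_or (a : Fin N) :
    (a + 1).val = a.val + 1 ∨ (a.val + 1 = N ∧ (a + 1).val = 0) := by
  rw [Fin.val_add, Fin.val_one', Nat.add_mod_mod]
  rcases Nat.lt_or_ge (a.val + 1) N with h | h
  · exact Or.inl (Nat.mod_eq_of_lt h)
  · have : a.val + 1 = N := by omega
    exact Or.inr ⟨this, by rw [this, Nat.mod_self]⟩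

lemma val_eq_val_add_one_mod_iff (i j : Fin N) : j.1 = (i.1 + 1) % N ↔ j = i + 1 := by
  rw [Fin.ext_iff, Fin.val_add, Fin.val_one', Nat.add_mod_mod]

lemma val_eq_val_add_sub_one_mod_iff (t i : Fin N) : i.1 = (t.1 + N - 1) % N ↔ t = i + 1 := by
  rw [← val_eq_val_add_one_mod_iff]
  have hi := i.isLt
  have ht := t.isLt
  have hpred : (t.1 + N - 1) % N = if t.1 = 0 then N - 1 else t.1 - 1 := by
    split_ifs with h
    · rw [h, Nat.zero_add, Nat.mod_eq_of_lt (by omega)]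
    · rw [show t.1 + N - 1 = t.1 - 1 + N by omega, Nat.add_mod_right,
        Nat.mod_eq_of_lt (by omega)]
  have hsucc : (i.1 + 1) % N = if i.1 + 1 = N then 0 else i.1 + 1 := by
    split_ifs with h
    · rw [h, Nat.mod_self]
    · exact Nat.mod_eq_of_lt (by omega)
  rw [hpred, hsucc]
  split_ifs <;> omega

end Fin

namespace Shuriken

open SimpleGraph

variable {N : ℕ}

abbrev tip (t : Fin N) : Option (Fin N ⊕ Fin N) := some (.inl t)

abbrev inner (i : Fin N) : Option (Fin N ⊕ Fin N) := some (.inr i)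

lemma vertex_cases (v : Option (Fin N ⊕ Fin N)) :
    v = none ∨ (∃ t, v = tip t) ∨ ∃ i, v = inner i := by
  rcases v with _ | t | i <;> simp

lemma inner_injective : Function.Injective (inner (N := N)) := fun _ _ h => by simpa using h

def covered (T : Finset (Fin N)) : Finset (Option (Fin N ⊕ Fin N)) :=
  insert none (Finset.univ.image inner ∪ T.image tip)

lemma coe_covered (T : Finset (Fin N)) :
    (covered T : Set (Option (Fin N ⊕ Fin N))) = {none} ∪
      Set.range (fun i : Fin N => some (Sum.inr i : Fin N ⊕ Fin N)) ∪
      (fun t : Fin N => some (Sum.inl t : Fin N ⊕ Fin N)) '' (T : Set (Fin N)) := by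
  ext v
  simp [covered, or_assoc, inner, tip]

lemma card_covered (T : Finset (Fin N)) : (covered T).card = N + T.card + 1 := by
  rw [covered, Finset.card_insert_of_notMem (by simp), Finset.card_union_of_disjoint
    (by simp [Finset.disjoint_left]), Finset.card_image_of_injective _ inner_injective,
    Finset.card_image_of_injective _ (fun _ _ h => by simpa using h), Finset.card_univ,
    Fintype.card_fin]

@[simp] lemma none_mem_covered (T : Finset (Fin N)) : none ∈ covered T :=
  Finset.mem_insert_self _ _

@[simp] lemma inner_mem_covered (T : Finset (Fin N)) (i : Fin N) : inner i ∈ covered T := by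
  simp [covered]

@[simp] lemma adj_none_inner (i : Fin N) : (shuriken1 N).Adj none (inner i) := by
  simp [shuriken1]

@[simp] lemma not_adj_tip_tip (t t' : Fin N) : ¬ (shuriken1 N).Adj (tip t) (tip t') := by
  simp [shuriken1]

@[simp] lemma not_adj_none_tip (t : Fin N) : ¬ (shuriken1 N).Adj none (tip t) := by
  simp [shuriken1]

lemma exists_eq_inner_of_adj_none {w : Option (Fin N ⊕ Fin N)}
    (h : (shuriken1 N).Adj none w) : ∃ i, w = inner i := by
  rcases vertex_cases w with rfl | ⟨t, rfl⟩ | ⟨i, rfl⟩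
  · simp at h
  · simp at h
  · exact ⟨i, rfl⟩

section

variable [NeZero N]

@[simp] lemma adj_inner_inner {i j : Fin N} :
    (shuriken1 N).Adj (inner i) (inner j) ↔ i ≠ j ∧ (j = i + 1 ∨ i = j + 1) := by
  simp [shuriken1, Fin.val_eq_val_add_one_mod_iff]

@[simp] lemma adj_tip_inner {t i : Fin N} :
    (shuriken1 N).Adj (tip t) (inner i) ↔ i = t ∨ t = i + 1 := by
  simp [shuriken1, Fin.val_eq_val_add_sub_one_mod_iff]

@[simp] lemma adj_inner_tip {t i : Fin N} :
    (shuriken1 N).Adj (inner i) (tip t) ↔ i = t ∨ t = i + 1 := by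
  rw [adj_comm, adj_tip_inner]

lemma exists_eq_inner_of_adj_tip {t : Fin N} {w : Option (Fin N ⊕ Fin N)}
    (h : (shuriken1 N).Adj (tip t) w) : ∃ i, w = inner i ∧ (i = t ∨ t = i + 1) := by
  rcases vertex_cases w with rfl | ⟨t', rfl⟩ | ⟨i, rfl⟩
  · simp [adj_comm] at h
  · simp at h
  · exact ⟨i, rfl, adj_tip_inner.mp h⟩

/-- Position in the sequence `none, inner k, tip (k + 1), inner (k + 1), …, inner (k - 1), tip k`,
in which each `tip t` comes right after its neighbour `inner (t - 1)`. -/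
def height (k : Fin N) : Option (Fin N ⊕ Fin N) → ℕ
  | none => 0
  | some (.inr i) => 2 * (i - k).val + 1
  | some (.inl t) => 2 * (t - 1 - k).val + 2

variable (k : Fin N)

@[simp] lemma height_none : height k none = 0 := rfl

@[simp] lemma height_inner (i : Fin N) : height k (inner i) = 2 * (i - k).val + 1 := rfl

@[simp] lemma height_tip (t : Fin N) : height k (tip t) = 2 * (t - 1 - k).val + 2 := rfl

lemma height_injective : Function.Injective (height k) := by
  rintro (_ | t | i) (_ | t' | i') h <;> simp only [height] at h <;> try omega
  · rfl
  · simpa using (Fin.ext (by omega) : t - 1 - k = t' - 1 - k)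
  · simpa using (Fin.ext (by omega) : i - k = i' - k)

lemma height_inner_lt (i : Fin N) : height k (inner i) < 2 * N := by
  have := (i - k).isLt
  simp only [height_inner]
  omega

lemma height_tip_succ (i : Fin N) : height k (tip (i + 1)) = height k (inner i) + 1 := by
  simp

lemma height_inner_succ (i : Fin N) :
    height k (inner (i + 1)) = height k (inner i) + 2 ∨
      (height k (inner i) = 2 * N - 1 ∧ i + 1 = k) := by
  simp only [height_inner, add_sub_right_comm i 1 k]
  rcases (i - k).val_add_one_or with h | ⟨h, h'⟩
  · left
    omega
  · right
    refine ⟨by omega, ?_⟩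
    rw [← sub_eq_zero, add_sub_right_comm]
    exact Fin.ext h'

lemma height_inner_eq_tip_add_one (t : Fin N) :
    height k (inner t) = height k (tip t) + 1 ∨ (height k (tip t) = 2 * N ∧ t = k) := by
  have hsucc := height_inner_succ k (t - 1)
  have htip := height_tip_succ k (t - 1)
  rw [sub_add_cancel] at hsucc htip
  omega

lemma adj_of_isSuccOn {W : Set (Option (Fin N ⊕ Fin N))} (hW : ∀ i, inner i ∈ W)
    {x y : Option (Fin N ⊕ Fin N)} (hs : IsSuccOn (height k) W x y) : (shuriken1 N).Adj x y := by
  have hlt := hs.2.2.1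
  -- whenever `x` and `y` are not adjacent, some `inner _` lies strictly between them
  rcases vertex_cases x with rfl | ⟨t, rfl⟩ | ⟨i, rfl⟩ <;>
    rcases vertex_cases y with rfl | ⟨t', rfl⟩ | ⟨j, rfl⟩
  · simp at hlt
  · refine (hs.not_between (hW k) ?_ ?_).elim <;> simp
  · exact adj_none_inner j
  · simp at hlt
  · simp only [height_tip] at hlt
    refine (hs.not_between (hW (t' - 1)) ?_ ?_).elim <;>
      simp only [height_tip, height_inner] <;> omega
  · by_cases hjt : j = t
    · exact adj_tip_inner.mpr (Or.inl hjt)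
    have hne := (height_injective k).ne (a₁ := inner t) (a₂ := inner j)
      (by simpa [eq_comm] using hjt)
    have := height_inner_lt k j
    rcases height_inner_eq_tip_add_one k t with e | ⟨e, -⟩
    · refine (hs.not_between (hW t) ?_ ?_).elim <;> omega
    · omega
  · simp at hlt
  · by_cases hti : t' = i + 1
    · exact adj_inner_tip.mpr (Or.inr hti)
    have hne := (height_injective k).ne (a₁ := inner (t' - 1)) (a₂ := inner i)
      (by simpa [sub_eq_iff_eq_add] using hti)
    have := height_tip_succ k (t' - 1)
    rw [sub_add_cancel] at this
    refine (hs.not_between (hW (t' - 1)) ?_ ?_).elim <;> omega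
  · by_cases hji : j = i + 1
    · exact adj_inner_inner.mpr ⟨by rintro rfl; exact lt_irrefl _ hlt, Or.inl hji⟩
    have hne := (height_injective k).ne (a₁ := inner (i + 1)) (a₂ := inner j)
      (by simpa [eq_comm] using hji)
    have := height_inner_lt k j
    rcases height_inner_succ k i with e | ⟨e, -⟩
    · refine (hs.not_between (hW (i + 1)) ?_ ?_).elim
      · omega
      · simp only [height_inner] at hlt e hne ⊢
        omega
    · omega

variable {M : (shuriken1 N).Subgraph}

lemma isSuccOn_of_adj (hM : M.IsMatching) (hk : M.Adj none (inner k))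
    {x y : Option (Fin N ⊕ Fin N)} (hxy : M.Adj x y) (hlt : height k x < height k y) :
    IsSuccOn (height k) M.verts x y := by
  have hx := M.edge_vert hxy
  have hy := M.edge_vert hxy.symm
  have hG := M.adj_sub hxy
  have partner_k : ∀ {w}, M.Adj (inner k) w → w = none := fun hw => hM.eq_of_adj_left hw hk.symm
  rcases vertex_cases x with rfl | ⟨t, rfl⟩ | ⟨i, rfl⟩ <;>
    rcases vertex_cases y with rfl | ⟨t', rfl⟩ | ⟨j, rfl⟩
  · simp at hlt
  · simp at hG
  · obtain rfl := inner_injective (hM.eq_of_adj_left hxy hk)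
    exact .of_eq_add_one hx hy (by simp)
  · simp at hlt
  · simp at hG
  · rcases adj_tip_inner.mp hG with rfl | rfl
    · rcases height_inner_eq_tip_add_one k j with e | ⟨-, rfl⟩
      · exact .of_eq_add_one hx hy e
      · simpa using partner_k hxy.symm
    · rw [height_tip_succ] at hlt
      omega
  · simp at hlt
  · rcases adj_inner_tip.mp hG with rfl | rfl
    · rcases height_inner_eq_tip_add_one k i with e | ⟨-, rfl⟩
      · omega
      · simpa using partner_k hxy
    · exact .of_eq_add_one hx hy (height_tip_succ k i)
  · obtain ⟨-, rfl | rfl⟩ := adj_inner_inner.mp hG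
    · rcases height_inner_succ k i with e | ⟨-, hik⟩
      · refine ⟨hx, hy, hlt, fun z hz => ?_⟩
        by_contra! hbetween
        obtain rfl : z = tip (i + 1) := height_injective k (by rw [height_tip_succ]; omega)
        -- `tip (i + 1)`, lying between them, would have no partner left
        obtain ⟨w, hw, -⟩ := hM hz
        obtain ⟨l, rfl, hl⟩ := exists_eq_inner_of_adj_tip (M.adj_sub hw)
        rcases hl with rfl | hl
        · simpa using hM.eq_of_adj_left hxy.symm hw.symm
        · obtain rfl : l = i := add_right_cancel hl.symm
          simpa using hM.eq_of_adj_left hxy hw.symm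
      · exact absurd (partner_k (hik ▸ hxy.symm)) (Option.some_ne_none _)
    · rcases height_inner_succ k j with e | ⟨-, hjk⟩
      · omega
      · exact absurd (partner_k (hjk ▸ hxy)) (Option.some_ne_none _)

lemma joinsSucc_height (hM : M.IsMatching) (hk : M.Adj none (inner k)) :
    M.JoinsSucc (height k) := by
  intro x y hxy
  rcases lt_trichotomy (height k x) (height k y) with h | h | h
  · exact .inl (isSuccOn_of_adj k hM hk hxy h)
  · exact absurd (height_injective k h) (M.adj_sub hxy).ne
  · exact .inr (isSuccOn_of_adj k hM hk hxy.symm h)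

lemma adj_none_of_joinsSucc (hM : M.IsMatching) (hnone : none ∈ M.verts)
    (hk : inner k ∈ M.verts) (hs : M.JoinsSucc (height k)) : M.Adj none (inner k) := by
  obtain ⟨y, hy, -⟩ := hM hnone
  rcases hs hy with h | h
  · have : height k y ≤ 1 := by simpa [hk] using h.2.2.2 _ hk
    have hy1 : height k y = height k (inner k) := by have := h.2.2.1; simp at this ⊢; omega
    rwa [height_injective k hy1] at hy
  · simpa using h.2.2.1

end

lemma card_matchings_of_odd [NeZero N] {T : Finset (Fin N)} (hNeven : Even N)
    (hT : Odd T.card) :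
    Nat.card {M : (shuriken1 N).Subgraph // M.IsMatching ∧ M.verts = covered T} = N := by
  have hW : ∀ k, ∃ M : (shuriken1 N).Subgraph,
      M.IsMatching ∧ M.verts = covered T ∧ M.JoinsSucc (height k) := fun k =>
    Subgraph.exists_isMatching_joinsSucc (height k) (covered T) (height_injective k).injOn
      (by rw [card_covered]; exact (hNeven.add_odd hT).add_one)
      (fun _ _ hs => adj_of_isSuccOn k (inner_mem_covered T) hs)
  choose M hM hverts hsucc using hW
  have hcentre : ∀ k, (M k).Adj none (inner k) := fun k =>
    adj_none_of_joinsSucc k (hM k) (by simp [hverts]) (by simp [hverts]) (hsucc k)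
  let f : Fin N → {M : (shuriken1 N).Subgraph // M.IsMatching ∧ M.verts = covered T} :=
    fun k => ⟨M k, hM k, hverts k⟩
  have hf : Function.Bijective f := by
    refine ⟨fun k k' e => ?_, fun ⟨M', hM', hV'⟩ => ?_⟩
    · have hMk : M k = M k' := congrArg Subtype.val e
      exact inner_injective ((hM k).eq_of_adj_left (hcentre k) (hMk ▸ hcentre k'))
    · obtain ⟨w, hw, -⟩ := hM' (v := none) (by simp [hV'])
      obtain ⟨k, rfl⟩ := exists_eq_inner_of_adj_none (M'.adj_sub hw)
      exact ⟨k, Subtype.ext ((hM k).eq_of_joinsSucc hM' (by rw [hverts, hV'])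
        (height_injective k).injOn (hsucc k) (joinsSucc_height k hM' hw))⟩
  rw [← Nat.card_congr (Equiv.ofBijective f hf), Nat.card_eq_fintype_card, Fintype.card_fin]

lemma isEmpty_matchings_of_even {T : Finset (Fin N)} (hNeven : Even N) (hT : Even T.card) :
    IsEmpty {M : (shuriken1 N).Subgraph // M.IsMatching ∧ M.verts = covered T} := by
  refine ⟨fun ⟨M, hM, hV⟩ => ?_⟩
  have := hM.even_card_of_verts_eq hV
  rw [card_covered, Nat.even_add_one] at this
  exact this (hNeven.add hT)

end Shuriken

/-- **Matching count in the odd-type shuriken graph**: for every even `N ≥ 4` and every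
subset `T` of the tips, the number of matchings of `S_N^1` whose set of covered vertices
is exactly (all the inner vertices and the centre) `∪ T` equals `N` if `|T|` is odd and
`0` if `|T|` is even.  Matchings are represented as subgraphs `M` with `M.IsMatching`,
whose vertex set `M.verts` is the set of covered vertices. -/
theorem shuriken1_matching_count (N : ℕ) (hN : 4 ≤ N) (hNeven : Even N)
    (T : Finset (Fin N)) :
    Nat.card { M : (shuriken1 N).Subgraph // M.IsMatching ∧
        M.verts = {(none : Option (Fin N ⊕ Fin N))} ∪
          Set.range (fun i : Fin N => some (Sum.inr i : Fin N ⊕ Fin N)) ∪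
          (fun t : Fin N => some (Sum.inl t : Fin N ⊕ Fin N)) '' (T : Set (Fin N)) } =
      if Odd T.card then N else 0 := by
  have : NeZero N := ⟨by omega⟩
  rw [← Shuriken.coe_covered]
  split_ifs with hT
  · exact Shuriken.card_matchings_of_odd hNeven hT
  · have := Shuriken.isEmpty_matchings_of_even (T := T) hNeven (Nat.not_odd_iff_even.mp hT)
    exact Nat.card_of_isEmpty
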